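/- arXiv:1907.01433 — 4 statements merged into one kernel-verified Lean document; each statement's English description precedes it below -/
import Mathlib

section
/- Let d ≥ 1 be an integer, k ∈ {0,…,d−1}, z ≥ 1 a real number, ε ∈ (0,1), and r > 1 a real number. Let S be a nonempty affine k-subspace of ℝ^d with D_z(0_d, S) ≥ ε·r, let S'' = {(x | r) : x ∈ S} ⊆ ℝ^{d+1}, let S' be the linear span of S'' in ℝ^{d+1}, and let e_{d+1} = (0,…,0,1) ∈ ℝ^{d+1}. Then D_z(r·e_{d+1}, S') ≥ ε·r / 2^z. -/
/-- `(q | r) ∈ ℝ^{d+1}`: the point `q ∈ ℝ^d` with the coordinate `r` appended. -/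
noncomputable def lift {d : ℕ} (q : EuclideanSpace ℝ (Fin d)) (r : ℝ) :
    EuclideanSpace ℝ (Fin (d + 1)) :=
  WithLp.toLp 2 (Fin.snoc (α := fun _ => ℝ) (WithLp.ofLp q) r)

/-!
Fix `p ∈ S`. Every point `y = (u | s)` of `S' = span {(x | r) : x ∈ S}` satisfies
`u - (s / r) • p ∈ S.direction`; hence when `t = s / r ≠ 0` the point `t⁻¹ • u` lies in `S`,
i.e. `u = t • q` with `q ∈ S`. If `t` is far from `1`, the last coordinate alone puts `y` at
distance `≥ r / 2` from `r • e`; otherwise `t > 1 / 2` and `‖u‖ ≥ dist(0, S) / 2`.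
So `dist(r • e, S') ≥ min r (dist(0, S)) / 2`, and raising to the power `z` gives the bound,
since both `r ^ z ≥ r ≥ ε r` and `dist(0, S) ^ z ≥ ε r`.
-/

open Metric

section Lift

variable {n : ℕ}

noncomputable def initₗ (n : ℕ) :
    EuclideanSpace ℝ (Fin (n + 1)) →ₗ[ℝ] EuclideanSpace ℝ (Fin n) where
  toFun w := WithLp.toLp 2 fun i => w i.castSucc
  map_add' _ _ := rfl
  map_smul' _ _ := rfl

@[simp]
lemma initₗ_apply (w : EuclideanSpace ℝ (Fin (n + 1))) (i : Fin n) :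
    initₗ n w i = w i.castSucc := rfl

@[simp]
lemma initₗ_lift (q : EuclideanSpace ℝ (Fin n)) (r : ℝ) : initₗ n (lift q r) = q := by
  ext i
  simp [lift]

@[simp]
lemma lift_apply_last (q : EuclideanSpace ℝ (Fin n)) (r : ℝ) : lift q r (Fin.last n) = r := by
  simp [lift]

lemma norm_initₗ_le (w : EuclideanSpace ℝ (Fin (n + 1))) : ‖initₗ n w‖ ≤ ‖w‖ := by
  rw [EuclideanSpace.norm_eq, EuclideanSpace.norm_eq, Fin.sum_univ_castSucc]
  gcongr
  simp only [initₗ_apply, le_add_iff_nonneg_right]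
  positivity

noncomputable def coneOffset (p : EuclideanSpace ℝ (Fin n)) (r : ℝ) :
    EuclideanSpace ℝ (Fin (n + 1)) →ₗ[ℝ] EuclideanSpace ℝ (Fin n) :=
  initₗ n - (r⁻¹ • (PiLp.projₗ 2 (fun _ => ℝ) (Fin.last n) :
    EuclideanSpace ℝ (Fin (n + 1)) →ₗ[ℝ] ℝ)).smulRight p

lemma coneOffset_apply (p : EuclideanSpace ℝ (Fin n)) (r : ℝ)
    (y : EuclideanSpace ℝ (Fin (n + 1))) :
    coneOffset p r y = initₗ n y - (y (Fin.last n) / r) • p := by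
  simp [coneOffset, div_eq_inv_mul]

variable {S : AffineSubspace ℝ (EuclideanSpace ℝ (Fin n))} {p : EuclideanSpace ℝ (Fin n)}
  {r : ℝ}

lemma span_lift_le_comap_coneOffset (hp : p ∈ S) (hr : r ≠ 0) :
    Submodule.span ℝ ((fun x => lift x r) '' (S : Set (EuclideanSpace ℝ (Fin n)))) ≤
      S.direction.comap (coneOffset p r) := by
  rw [Submodule.span_le, Set.image_subset_iff]
  intro x hx
  simpa [coneOffset_apply, hr] using AffineSubspace.vsub_mem_direction hx hp

lemma inv_smul_initₗ_mem (hp : p ∈ S) {y : EuclideanSpace ℝ (Fin (n + 1))}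
    (hy : coneOffset p r y ∈ S.direction) (ht : y (Fin.last n) / r ≠ 0) :
    (y (Fin.last n) / r)⁻¹ • initₗ n y ∈ S := by
  have hmem := AffineSubspace.vadd_mem_of_mem_direction
    (S.direction.smul_mem (y (Fin.last n) / r)⁻¹ hy) hp
  rwa [coneOffset_apply, vadd_eq_add, smul_sub, smul_smul, inv_mul_cancel₀ ht, one_smul,
    sub_add_cancel] at hmem

lemma min_div_two_le_dist (hr : 0 < r) (hp : p ∈ S) {y : EuclideanSpace ℝ (Fin (n + 1))}
    (hy : coneOffset p r y ∈ S.direction) :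
    min r (infDist 0 (S : Set (EuclideanSpace ℝ (Fin n)))) / 2 ≤ dist (r • lift 0 1) y := by
  set t := y (Fin.last n) / r with ht
  rw [dist_comm, dist_eq_norm]
  rcases le_or_gt (1 / 2) |1 - t| with hfar | hnear
  · have hlast : (y - r • lift 0 1).ofLp (Fin.last n) = -(r * (1 - t)) := by
      simp [ht, mul_sub, mul_div_cancel₀ _ hr.ne']
    have hle := PiLp.norm_apply_le (y - r • lift 0 1) (Fin.last n)
    rw [hlast, norm_neg, Real.norm_eq_abs, abs_mul, abs_of_pos hr] at hle
    nlinarith [min_le_left r (infDist 0 (S : Set (EuclideanSpace ℝ (Fin n))))]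
  · have ht_half : 1 / 2 < t := by linarith [(abs_lt.mp hnear).2]
    have hq := inv_smul_initₗ_mem hp hy (by linarith)
    have hδ : infDist 0 (S : Set (EuclideanSpace ℝ (Fin n))) ≤ ‖t⁻¹ • initₗ n y‖ := by
      rw [← dist_zero_left]
      exact infDist_le_dist_of_mem hq
    rw [norm_smul, norm_inv, Real.norm_of_nonneg (by linarith),
      le_inv_mul_iff₀ (by linarith)] at hδ
    have hle := norm_initₗ_le (y - r • lift 0 1)
    rw [map_sub, map_smul, initₗ_lift, smul_zero, sub_zero] at hle
    nlinarith [min_le_right r (infDist 0 (S : Set (EuclideanSpace ℝ (Fin n)))),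
      infDist_nonneg (x := (0 : EuclideanSpace ℝ (Fin n))) (s := (S : Set _))]

end Lift

lemma mul_le_min_rpow {ε r δ z : ℝ} (hε : ε ≤ 1) (hr : 1 ≤ r) (hz : 1 ≤ z)
    (hδ : ε * r ≤ δ ^ z) : ε * r ≤ min r δ ^ z := by
  rcases min_choice r δ with h | h <;> rw [h]
  · calc ε * r ≤ r := mul_le_of_le_one_left (by linarith) hε
      _ = r ^ (1 : ℝ) := (Real.rpow_one r).symm
      _ ≤ r ^ z := Real.rpow_le_rpow_of_exponent_le hr hz
  · exact hδ

theorem stmt7_general (d : ℕ)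
    (z ε r : ℝ) (hz : 1 ≤ z) (hε : ε ∈ Set.Ioo (0 : ℝ) 1) (hrr : 1 < r)
    (S : AffineSubspace ℝ (EuclideanSpace ℝ (Fin d)))
    (hfar : ε * r ≤ Metric.infDist 0 (S : Set (EuclideanSpace ℝ (Fin d))) ^ z)
    (e : EuclideanSpace ℝ (Fin (d + 1))) (he : e = lift 0 1)
    (S' : Submodule ℝ (EuclideanSpace ℝ (Fin (d + 1))))
    (hS' : S' = Submodule.span ℝ
      ((fun x => lift x r) '' (S : Set (EuclideanSpace ℝ (Fin d))))) :
    ε * r / 2 ^ z ≤ Metric.infDist (r • e) (S' : Set (EuclideanSpace ℝ (Fin (d + 1)))) ^ z := by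
  set δ := infDist 0 (S : Set (EuclideanSpace ℝ (Fin d)))
  have hr : 0 < r := by linarith
  have hδ : 0 < δ := by
    by_contra! hδ
    rw [le_antisymm hδ infDist_nonneg, Real.zero_rpow (by linarith)] at hfar
    nlinarith [hε.1]
  obtain ⟨p, hp⟩ : (S : Set (EuclideanSpace ℝ (Fin d))).Nonempty := by
    by_contra hS
    simp [δ, Set.not_nonempty_iff_eq_empty.mp hS] at hδ
  have hdist : min r δ / 2 ≤ infDist (r • e) (S' : Set _) := by
    subst he hS'
    exact (le_infDist ⟨0, Submodule.zero_mem _⟩).2 fun y hy =>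
      min_div_two_le_dist hr hp (span_lift_le_comap_coneOffset hp hr.ne' hy)
  calc ε * r / 2 ^ z ≤ min r δ ^ z / 2 ^ z := by
        gcongr
        exact mul_le_min_rpow hε.2.le hrr.le hz hfar
    _ = (min r δ / 2) ^ z := (Real.div_rpow (le_min hr.le hδ.le) zero_le_two z).symm
    _ ≤ _ := Real.rpow_le_rpow (by positivity) hdist (by linarith)

/-- Let `z ≥ 1`, `ε ∈ (0,1)`, `r > 1`. If `S` is a nonempty affine
`k`-subspace of `ℝ^d` with `D_z(0,S) ≥ εr`, `S'' = {(x|r) : x ∈ S}`, `S'` the linear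
span of `S''` in `ℝ^{d+1}`, and `e_{d+1} = (0,…,0,1)`, then
`D_z(r·e_{d+1},S') ≥ εr/2^z`. -/
theorem stmt7 (d k : ℕ) (hd : 1 ≤ d) (hk : k ≤ d - 1)
    (z ε r : ℝ) (hz : 1 ≤ z) (hε : ε ∈ Set.Ioo (0 : ℝ) 1) (hrr : 1 < r)
    (S : AffineSubspace ℝ (EuclideanSpace ℝ (Fin d)))
    (hS : (S : Set (EuclideanSpace ℝ (Fin d))).Nonempty)
    (hdim : Module.finrank ℝ S.direction = k)
    (hfar : ε * r ≤ Metric.infDist 0 (S : Set (EuclideanSpace ℝ (Fin d))) ^ z)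
    (e : EuclideanSpace ℝ (Fin (d + 1))) (he : e = lift 0 1)
    (S' : Submodule ℝ (EuclideanSpace ℝ (Fin (d + 1))))
    (hS' : S' = Submodule.span ℝ
      ((fun x => lift x r) '' (S : Set (EuclideanSpace ℝ (Fin d))))) :
    ε * r / 2 ^ z ≤ Metric.infDist (r • e) (S' : Set (EuclideanSpace ℝ (Fin (d + 1)))) ^ z :=
  stmt7_general d z ε r hz hε hrr S hfar e he S' hS'
end

section
/- Let d ≥ 1 be an integer, k ∈ {0,…,d−1}, z ≥ 1 a real number, and ε ∈ (0, 1/(2^{z+1}+2)]. Let P be a finite nonempty set of points in ℝ^d, set ψ = (ε/z)^z, r = 1 + max_{q∈P} D_z(q, 0_d)/(ψ·ε²), and e_{d+1} = (0,…,0,1) ∈ ℝ^{d+1}. Let p ∈ P with lifted point p' = (p | r) ∈ ℝ^{d+1}, and let S' be a (k+1)-dimensional linear subspace of ℝ^{d+1} that is orthogonal to e_{d+1}. Then |D_z(r·e_{d+1}, S') − D_z(p', S')| ≤ 2ε·D_z(r·e_{d+1}, S'). -/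
/-!
The lifted point `p'` differs from `r • e` by `(p | 0)`, so since `infDist` is 1-Lipschitz,
`r = infDist (r • e) S' ≤ infDist p' S' ≤ r + ‖p‖`; the lower bounds hold because the
`e`-coordinate `⟪v, e⟫` of a point does not change when `v` moves within `S' ⊥ e`, so it
bounds the distance from `v` to `S'`. The choice of `r` forces `‖p‖ ≤ (ε / z) r`, hence
`infDist p' S' ^ z ≤ (1 + ε / z) ^ z r ^ z ≤ e^ε r ^ z ≤ (1 + 2ε) r ^ z`.
-/

open scoped RealInnerProductSpace

section OrthogonalDirection

variable {E : Type*} [NormedAddCommGroup E] [InnerProductSpace ℝ E]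

lemma abs_inner_le_infDist {S : Submodule ℝ E} {e : E} (he : ‖e‖ ≤ 1)
    (horth : ∀ y ∈ S, ⟪y, e⟫ = 0) (v : E) :
    |⟪v, e⟫| ≤ Metric.infDist v (S : Set E) := by
  refine (Metric.le_infDist ⟨0, S.zero_mem⟩).2 fun y hy => ?_
  calc |⟪v, e⟫| = |⟪v - y, e⟫| := by rw [inner_sub_left, horth y hy, sub_zero]
    _ ≤ ‖v - y‖ * ‖e‖ := abs_real_inner_le_norm _ _
    _ ≤ ‖v - y‖ := mul_le_of_le_one_right (norm_nonneg _) he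
    _ = dist v y := (dist_eq_norm v y).symm

lemma infDist_smul_eq {S : Submodule ℝ E} {e : E} (he : ‖e‖ = 1)
    (horth : ∀ y ∈ S, ⟪y, e⟫ = 0) {r : ℝ} (hr : 0 ≤ r) :
    Metric.infDist (r • e) (S : Set E) = r := by
  apply le_antisymm
  · calc Metric.infDist (r • e) (S : Set E) ≤ dist (r • e) 0 :=
          Metric.infDist_le_dist_of_mem S.zero_mem
      _ = r := by rw [dist_zero_right, norm_smul, he, mul_one, Real.norm_of_nonneg hr]
  · calc r = |⟪r • e, e⟫| := by
          rw [real_inner_smul_left, real_inner_self_eq_norm_sq, he, one_pow, mul_one,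
            abs_of_nonneg hr]
      _ ≤ _ := abs_inner_le_infDist he.le horth _

end OrthogonalDirection

section Lift

variable {d : ℕ}

lemma inner_lift (q q' : EuclideanSpace ℝ (Fin d)) (s s' : ℝ) :
    ⟪lift q s, lift q' s'⟫ = ⟪q, q'⟫ + s * s' := by
  simp [lift, PiLp.inner_apply, Fin.sum_univ_castSucc, RCLike.inner_apply, mul_comm]

lemma norm_sq_lift (q : EuclideanSpace ℝ (Fin d)) (s : ℝ) :
    ‖lift q s‖ ^ 2 = ‖q‖ ^ 2 + s ^ 2 := by
  rw [← real_inner_self_eq_norm_sq, inner_lift, real_inner_self_eq_norm_sq, sq s]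

lemma norm_lift_zero_one : ‖lift (0 : EuclideanSpace ℝ (Fin d)) 1‖ = 1 := by
  have h := norm_sq_lift (0 : EuclideanSpace ℝ (Fin d)) 1
  rw [norm_zero] at h
  nlinarith [norm_nonneg (lift (0 : EuclideanSpace ℝ (Fin d)) 1)]

lemma dist_lift_smul_lift_zero_one (q : EuclideanSpace ℝ (Fin d)) (s : ℝ) :
    dist (lift q s) (s • lift 0 1) = ‖q‖ := by
  have hsub : lift q s - s • lift 0 1 = lift q 0 := by
    ext i
    refine Fin.lastCases ?_ (fun j => ?_) i <;> simp [lift]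
  have h := norm_sq_lift q 0
  rw [dist_eq_norm, hsub]
  nlinarith [norm_nonneg (lift q 0), norm_nonneg q]

end Lift

lemma le_one_add_rpow {a z : ℝ} (ha : 0 ≤ a) (hz : 1 ≤ z) : a ≤ 1 + a ^ z := by
  rcases le_total a 1 with h | h
  · linarith [Real.rpow_nonneg ha z]
  · linarith [Real.self_le_rpow_of_one_le h hz]

lemma le_mul_of_one_add_rpow_div_le {a z ε r : ℝ} (ha : 0 ≤ a) (hz : 1 ≤ z) (hε0 : 0 < ε)
    (hε1 : ε ≤ 1) (hr : 1 + a ^ z / ((ε / z) ^ z * ε ^ 2) ≤ r) :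
    a ≤ ε / z * r := by
  have hεz : 0 < ε / z := div_pos hε0 (by linarith)
  have hψ : 0 < (ε / z) ^ z := Real.rpow_pos_of_pos hεz z
  have hscale : (a / (ε / z)) ^ z ≤ a ^ z / ((ε / z) ^ z * ε ^ 2) := by
    rw [Real.div_rpow ha hεz.le]
    gcongr
    exact mul_le_of_le_one_right hψ.le (pow_le_one₀ hε0.le hε1)
  have h := le_one_add_rpow (div_nonneg ha hεz.le) hz
  have : a / (ε / z) ≤ r := by linarith
  rwa [div_le_iff₀ hεz, mul_comm] at this

lemma one_add_div_rpow_le {z ε : ℝ} (hz : 0 < z) (hε0 : 0 ≤ ε) (hε1 : ε ≤ 1) :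
    (1 + ε / z) ^ z ≤ 1 + 2 * ε := by
  have hexp : Real.exp ε ≤ 1 + ε + ε ^ 2 := by
    have h := Real.abs_exp_sub_one_sub_id_le (x := ε) (by rwa [abs_of_nonneg hε0])
    linarith [(abs_le.1 h).2]
  calc (1 + ε / z) ^ z ≤ Real.exp (ε / z) ^ z :=
        Real.rpow_le_rpow (by positivity) (by linarith [Real.add_one_le_exp (ε / z)]) hz.le
    _ = Real.exp ε := by rw [← Real.exp_mul, div_mul_cancel₀ ε hz.ne']
    _ ≤ 1 + 2 * ε := by nlinarith

theorem stmt9_general (d : ℕ)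
    (z ε : ℝ) (hz : 1 ≤ z) (hε : ε ∈ Set.Ioc (0 : ℝ) (1 / (2 ^ (z + 1) + 2)))
    (P : Finset (EuclideanSpace ℝ (Fin d))) (hP : P.Nonempty)
    (p : EuclideanSpace ℝ (Fin d)) (hp : p ∈ P)
    (ψ r : ℝ) (hψ : ψ = (ε / z) ^ z)
    (hr : r = 1 + P.sup' hP fun q => dist q 0 ^ z / (ψ * ε ^ 2))
    (e : EuclideanSpace ℝ (Fin (d + 1))) (he : e = lift 0 1)
    (p' : EuclideanSpace ℝ (Fin (d + 1))) (hp' : p' = lift p r)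
    (S' : Submodule ℝ (EuclideanSpace ℝ (Fin (d + 1))))
    (horth : ∀ y ∈ S', ⟪y, e⟫ = (0 : ℝ)) :
    |Metric.infDist (r • e) (S' : Set (EuclideanSpace ℝ (Fin (d + 1)))) ^ z -
        Metric.infDist p' (S' : Set (EuclideanSpace ℝ (Fin (d + 1)))) ^ z| ≤
      2 * ε * Metric.infDist (r • e) (S' : Set (EuclideanSpace ℝ (Fin (d + 1)))) ^ z := by
  obtain ⟨hε0, hε⟩ := hε
  have hε1 : ε ≤ 1 := hε.trans <| by
    rw [div_le_one (by positivity)]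
    linarith [Real.rpow_pos_of_pos two_pos (z + 1)]
  have hrp : 1 + ‖p‖ ^ z / ((ε / z) ^ z * ε ^ 2) ≤ r := by
    rw [hr, ← hψ, ← dist_zero_right]
    gcongr
    exact Finset.le_sup' (fun q => dist q 0 ^ z / (ψ * ε ^ 2)) hp
  have hr0 : 0 ≤ r := le_trans (by positivity) hrp
  have hpr := le_mul_of_one_add_rpow_div_le (norm_nonneg p) hz hε0 hε1 hrp
  have he1 : ‖e‖ = 1 := he ▸ norm_lift_zero_one
  have hre := infDist_smul_eq he1 horth hr0
  have hlower : r ≤ Metric.infDist p' S' := by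
    simpa [hp', he, inner_lift, abs_of_nonneg hr0] using abs_inner_le_infDist he1.le horth p'
  have hdist : dist p' (r • e) = ‖p‖ := by rw [hp', he, dist_lift_smul_lift_zero_one]
  have hupper : Metric.infDist p' S' ≤ (1 + ε / z) * r := by
    linarith [Metric.infDist_le_infDist_add_dist (s := (S' : Set _)) (x := p') (y := r • e)]
  have hpow : Metric.infDist p' S' ^ z ≤ (1 + 2 * ε) * r ^ z :=
    calc Metric.infDist p' S' ^ z ≤ ((1 + ε / z) * r) ^ z :=
          Real.rpow_le_rpow (hr0.trans hlower) hupper (by linarith)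
      _ = (1 + ε / z) ^ z * r ^ z := Real.mul_rpow (by positivity) hr0
      _ ≤ (1 + 2 * ε) * r ^ z := by
        gcongr
        exact one_add_div_rpow_le (by linarith) hε0.le hε1
  have hmono : r ^ z ≤ Metric.infDist p' S' ^ z := by gcongr
  rw [hre, abs_sub_le_iff]
  constructor <;> linarith

/-- With `z ≥ 1`, `ε ∈ (0, 1/(2^{z+1}+2)]`, `ψ = (ε/z)^z`,
`r = 1 + max_{q∈P} dist(q,0)^z/(ψε²)`, `e_{d+1} = (0,…,0,1)`, `p ∈ P`, `p' = (p | r)`: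
if `S'` is a `(k+1)`-dimensional linear subspace of `ℝ^{d+1}` orthogonal to `e_{d+1}`,
then `|D_z(r·e_{d+1},S') − D_z(p',S')| ≤ 2ε·D_z(r·e_{d+1},S')`. -/
theorem stmt9 (d k : ℕ) (hd : 1 ≤ d) (hk : k ≤ d - 1)
    (z ε : ℝ) (hz : 1 ≤ z) (hε : ε ∈ Set.Ioc (0 : ℝ) (1 / (2 ^ (z + 1) + 2)))
    (P : Finset (EuclideanSpace ℝ (Fin d))) (hP : P.Nonempty)
    (p : EuclideanSpace ℝ (Fin d)) (hp : p ∈ P)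
    (ψ r : ℝ) (hψ : ψ = (ε / z) ^ z)
    (hr : r = 1 + P.sup' hP fun q => dist q 0 ^ z / (ψ * ε ^ 2))
    (e : EuclideanSpace ℝ (Fin (d + 1))) (he : e = lift 0 1)
    (p' : EuclideanSpace ℝ (Fin (d + 1))) (hp' : p' = lift p r)
    (S' : Submodule ℝ (EuclideanSpace ℝ (Fin (d + 1))))
    (hdim : Module.finrank ℝ S' = k + 1)
    (horth : ∀ y ∈ S', ⟪y, e⟫ = (0 : ℝ)) :
    |Metric.infDist (r • e) (S' : Set (EuclideanSpace ℝ (Fin (d + 1)))) ^ z -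
        Metric.infDist p' (S' : Set (EuclideanSpace ℝ (Fin (d + 1)))) ^ z| ≤
      2 * ε * Metric.infDist (r • e) (S' : Set (EuclideanSpace ℝ (Fin (d + 1)))) ^ z :=
  stmt9_general d z ε hz hε P hP p hp ψ r hψ hr e he p' hp' S' horth
end

section
/- Let d ≥ 1 be an integer, k ∈ {0,…,d−1}, z ≥ 1 a real number, and ε ∈ (0, 1/(2^{z+1}+2)]. Let P be a finite nonempty set of points in ℝ^d, set ψ = (ε/z)^z, r = 1 + max_{q∈P} D_z(q, 0_d)/(ψ·ε²), c₀ = (εr)^{1/z} / √((εr)^{2/z} + r²), and e_{d+1} = (0,…,0,1) ∈ ℝ^{d+1}. Let p ∈ P with lifted point p' = (p | r) ∈ ℝ^{d+1}, and let S' be a (k+1)-dimensional linear subspace of ℝ^{d+1} with dist(r·e_{d+1}, S') ≥ c₀·r. Then (1 − (2^z+1)ε)·D_z(r·e_{d+1}, S') ≤ D_z(p', S') ≤ (1 + (2^z+1)ε)·D_z(r·e_{d+1}, S'). -/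
namespace Real

theorem one_sub_le_one_sub_div_rpow {t z : ℝ} (hz : 1 ≤ z) (ht : t ≤ z) :
    1 - t ≤ (1 - t / z) ^ z := by
  have hs : -1 ≤ -(t / z) := by
    rw [neg_le_neg_iff, div_le_one₀ (by linarith)]
    exact ht
  have := one_add_mul_self_le_rpow_one_add hs hz
  rwa [mul_neg, mul_div_cancel₀ _ (by positivity), ← sub_eq_add_neg, ← sub_eq_add_neg] at this

theorem one_add_div_rpow_le_exp {t z : ℝ} (hz : 0 < z) (ht : 0 ≤ t) :
    (1 + t / z) ^ z ≤ exp t :=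
  calc (1 + t / z) ^ z ≤ exp (t / z) ^ z :=
        rpow_le_rpow (by positivity) (by linarith [add_one_le_exp (t / z)]) hz.le
    _ = exp t := by rw [← exp_mul, div_mul_cancel₀ _ hz.ne']

theorem exp_le_one_add_two_mul {t : ℝ} (h0 : 0 ≤ t) (h : t ≤ 1 / 2) : exp t ≤ 1 + 2 * t :=
  calc exp t ≤ 1 / (1 - t) := exp_bound_div_one_sub_of_interval h0 (by linarith)
    _ ≤ 1 + 2 * t := by rw [div_le_iff₀ (by linarith)]; nlinarith

theorem rpow_bounds_of_abs_sub_le {a b t z : ℝ} (ha : 0 ≤ a) (hb : 0 ≤ b) (hz : 1 ≤ z)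
    (ht0 : 0 ≤ t) (ht : t ≤ 1 / 2) (hab : |a - b| ≤ t / z * b) :
    (1 - 2 * t) * b ^ z ≤ a ^ z ∧ a ^ z ≤ (1 + 2 * t) * b ^ z := by
  have hz0 : 0 < z := by linarith
  have htz : t / z ≤ t := div_le_self ht0 hz
  obtain ⟨hlow, hupp⟩ := abs_sub_le_iff.mp hab
  constructor
  · calc (1 - 2 * t) * b ^ z ≤ (1 - t / z) ^ z * b ^ z := by
          gcongr
          linarith [one_sub_le_one_sub_div_rpow hz (by linarith : t ≤ z)]
      _ = ((1 - t / z) * b) ^ z := (mul_rpow (by linarith) hb).symm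
      _ ≤ a ^ z := rpow_le_rpow (by nlinarith) (by linarith) hz0.le
  · calc a ^ z ≤ ((1 + t / z) * b) ^ z := rpow_le_rpow ha (by linarith) hz0.le
      _ = (1 + t / z) ^ z * b ^ z := mul_rpow (by positivity) hb
      _ ≤ (1 + 2 * t) * b ^ z := by
          gcongr
          exact (one_add_div_rpow_le_exp hz0 ht0).trans (exp_le_one_add_two_mul ht0 ht)

end Real

theorem sqrt_two_mul_le_of_le_one_div {z ε : ℝ} (hz : 1 ≤ z) (hε0 : 0 < ε)
    (hε : ε ≤ 1 / (2 ^ (z + 1) + 2)) :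
    √2 * ε ≤ 1 / 2 ∧ 2 * (√2 * ε) ≤ (2 ^ z + 1) * ε := by
  have h2z : (2 : ℝ) ≤ 2 ^ z := by
    simpa using Real.rpow_le_rpow_of_exponent_le one_le_two hz
  have hε6 : ε ≤ 1 / 6 := hε.trans (one_div_le_one_div_of_le (by norm_num) (by
    rw [Real.rpow_add_one two_ne_zero]; linarith))
  have hs2 : √2 ≤ 3 / 2 := by
    rw [Real.sqrt_le_left (by norm_num)]; norm_num
  constructor <;> nlinarith

theorem rpow_div_sqrt_two_le {ε r z : ℝ} (hε0 : 0 ≤ ε) (hε1 : ε ≤ 1) (hr : 1 ≤ r) (hz : 1 ≤ z) :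
    (ε * r) ^ (1 / z) / √2 ≤ (ε * r) ^ (1 / z) / √((ε * r) ^ (2 / z) + r ^ 2) * r := by
  set u := (ε * r) ^ (1 / z)
  have hu : 0 ≤ u := by positivity
  have hur : u ≤ r := calc
    u ≤ r ^ (1 / z) := Real.rpow_le_rpow (by positivity) (by nlinarith) (by positivity)
    _ ≤ r ^ (1 : ℝ) :=
        Real.rpow_le_rpow_of_exponent_le hr (by rw [div_le_one (by linarith)]; exact hz)
    _ = r := Real.rpow_one r
  have hu2 : (ε * r) ^ (2 / z) = u ^ 2 := by
    rw [← Real.rpow_natCast, ← Real.rpow_mul (by positivity)]; ring_nf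
  have hsqrt : √(u ^ 2 + r ^ 2) ≤ √2 * r :=
    calc √(u ^ 2 + r ^ 2) ≤ √(2 * r ^ 2) := Real.sqrt_le_sqrt (by nlinarith)
      _ = √2 * r := by rw [Real.sqrt_mul zero_le_two, Real.sqrt_sq (by linarith)]
  rw [hu2, div_mul_eq_mul_div, div_le_div_iff₀ (by positivity) (by positivity)]
  calc u * √(u ^ 2 + r ^ 2) ≤ u * (√2 * r) := by gcongr
    _ = u * r * √2 := by ring

theorem le_div_mul_rpow_of_rpow_le {x ε r z : ℝ} (hx : 0 ≤ x) (hε0 : 0 ≤ ε) (hε1 : ε ≤ 1)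
    (hr : 0 ≤ r) (hz : 0 < z) (h : x ^ z ≤ r * ((ε / z) ^ z * ε ^ 2)) :
    x ≤ ε / z * (ε * r) ^ (1 / z) := by
  rw [← Real.rpow_le_rpow_iff hx (by positivity) hz, Real.mul_rpow (by positivity) (by positivity),
    one_div, Real.rpow_inv_rpow (by positivity) hz.ne']
  calc x ^ z ≤ r * ((ε / z) ^ z * ε ^ 2) := h
    _ ≤ r * ((ε / z) ^ z * ε) := by gcongr; nlinarith
    _ = (ε / z) ^ z * (ε * r) := by ring

theorem abs_infDist_sub_infDist_le {α : Type*} [PseudoMetricSpace α] (s : Set α) (x y : α) :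
    |Metric.infDist x s - Metric.infDist y s| ≤ dist x y := by
  simpa [Real.dist_eq] using (Metric.lipschitz_infDist_pt s).dist_le_mul x y

section lift

variable {d : ℕ}

theorem smul_lift (c : ℝ) (q : EuclideanSpace ℝ (Fin d)) (a : ℝ) :
    c • lift q a = lift (c • q) (c * a) := by
  ext i
  refine Fin.lastCases ?_ (fun j => ?_) i <;> simp [lift]

theorem dist_lift_lift (p q : EuclideanSpace ℝ (Fin d)) (a : ℝ) :
    dist (lift p a) (lift q a) = dist p q := by
  simp [EuclideanSpace.dist_eq, Fin.sum_univ_castSucc, lift]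

end lift

theorem stmt10_general (d : ℕ)
    (z ε : ℝ) (hz : 1 ≤ z) (hε : ε ∈ Set.Ioc (0 : ℝ) (1 / (2 ^ (z + 1) + 2)))
    (P : Finset (EuclideanSpace ℝ (Fin d))) (hP : P.Nonempty)
    (p : EuclideanSpace ℝ (Fin d)) (hp : p ∈ P)
    (ψ r c₀ : ℝ) (hψ : ψ = (ε / z) ^ z)
    (hr : r = 1 + P.sup' hP fun q => dist q 0 ^ z / (ψ * ε ^ 2))
    (hc₀ : c₀ = (ε * r) ^ (1 / z) / Real.sqrt ((ε * r) ^ (2 / z) + r ^ 2))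
    (e : EuclideanSpace ℝ (Fin (d + 1))) (he : e = lift 0 1)
    (p' : EuclideanSpace ℝ (Fin (d + 1))) (hp' : p' = lift p r)
    (S' : Submodule ℝ (EuclideanSpace ℝ (Fin (d + 1))))
    (hfar : c₀ * r ≤ Metric.infDist (r • e) (S' : Set (EuclideanSpace ℝ (Fin (d + 1))))) :
    (1 - (2 ^ z + 1) * ε) * Metric.infDist (r • e) (S' : Set (EuclideanSpace ℝ (Fin (d + 1)))) ^ z ≤
        Metric.infDist p' (S' : Set (EuclideanSpace ℝ (Fin (d + 1)))) ^ z ∧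
      Metric.infDist p' (S' : Set (EuclideanSpace ℝ (Fin (d + 1)))) ^ z ≤
        (1 + (2 ^ z + 1) * ε) *
          Metric.infDist (r • e) (S' : Set (EuclideanSpace ℝ (Fin (d + 1)))) ^ z := by
  obtain ⟨hε0, hεle⟩ := hε
  obtain ⟨ht, h2t⟩ := sqrt_two_mul_le_of_le_one_div hz hε0 hεle
  have hε1 : ε ≤ 1 := by nlinarith [Real.one_lt_sqrt_two]
  have hψε : 0 < ψ * ε ^ 2 := by rw [hψ]; positivity
  have hpr : dist p 0 ^ z / (ψ * ε ^ 2) ≤ r - 1 := by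
    rw [hr, add_sub_cancel_left]; exact P.le_sup' (fun q => dist q 0 ^ z / (ψ * ε ^ 2)) hp
  have hr1 : 1 ≤ r := by linarith [show 0 ≤ dist p 0 ^ z / (ψ * ε ^ 2) by positivity]
  set D := Metric.infDist (r • e) (S' : Set (EuclideanSpace ℝ (Fin (d + 1))))
  have hDu : (ε * r) ^ (1 / z) ≤ √2 * D := by
    rw [← div_le_iff₀' (by positivity)]
    exact (rpow_div_sqrt_two_le hε0.le hε1 hr1 hz).trans (hc₀ ▸ hfar)
  have hpu : dist p 0 ≤ ε / z * (ε * r) ^ (1 / z) := by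
    refine le_div_mul_rpow_of_rpow_le dist_nonneg hε0.le hε1 (by linarith) (by linarith) ?_
    rw [div_le_iff₀ hψε] at hpr
    rw [← hψ]; nlinarith
  have hclose : |Metric.infDist p' S' - D| ≤ √2 * ε / z * D := calc
    _ ≤ dist p' (r • e) := abs_infDist_sub_infDist_le _ _ _
    _ = dist p 0 := by rw [hp', he, smul_lift, smul_zero, mul_one, dist_lift_lift]
    _ ≤ ε / z * (√2 * D) := hpu.trans (by gcongr)
    _ = √2 * ε / z * D := by ring
  obtain ⟨hlow, hupp⟩ := Real.rpow_bounds_of_abs_sub_le (t := √2 * ε)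
    Metric.infDist_nonneg Metric.infDist_nonneg hz (by positivity) ht hclose
  have hDz : 0 ≤ D ^ z := Real.rpow_nonneg Metric.infDist_nonneg z
  exact ⟨(mul_le_mul_of_nonneg_right (by linarith) hDz).trans hlow,
    hupp.trans (mul_le_mul_of_nonneg_right (by linarith) hDz)⟩

/-- With `z ≥ 1`, `ε ∈ (0, 1/(2^{z+1}+2)]`, `ψ = (ε/z)^z`,
`r = 1 + max_{q∈P} dist(q,0)^z/(ψε²)`, `c₀ = (εr)^{1/z}/√((εr)^{2/z}+r²)`,
`e_{d+1} = (0,…,0,1)`, `p ∈ P`, `p' = (p | r)`: if `S'` is a `(k+1)`-dimensional linear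
subspace of `ℝ^{d+1}` with `dist(r·e_{d+1},S') ≥ c₀·r`, then
`(1−(2^z+1)ε)·D_z(r·e_{d+1},S') ≤ D_z(p',S') ≤ (1+(2^z+1)ε)·D_z(r·e_{d+1},S')`. -/
theorem stmt10 (d k : ℕ) (hd : 1 ≤ d) (hk : k ≤ d - 1)
    (z ε : ℝ) (hz : 1 ≤ z) (hε : ε ∈ Set.Ioc (0 : ℝ) (1 / (2 ^ (z + 1) + 2)))
    (P : Finset (EuclideanSpace ℝ (Fin d))) (hP : P.Nonempty)
    (p : EuclideanSpace ℝ (Fin d)) (hp : p ∈ P)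
    (ψ r c₀ : ℝ) (hψ : ψ = (ε / z) ^ z)
    (hr : r = 1 + P.sup' hP fun q => dist q 0 ^ z / (ψ * ε ^ 2))
    (hc₀ : c₀ = (ε * r) ^ (1 / z) / Real.sqrt ((ε * r) ^ (2 / z) + r ^ 2))
    (e : EuclideanSpace ℝ (Fin (d + 1))) (he : e = lift 0 1)
    (p' : EuclideanSpace ℝ (Fin (d + 1))) (hp' : p' = lift p r)
    (S' : Submodule ℝ (EuclideanSpace ℝ (Fin (d + 1))))
    (hdim : Module.finrank ℝ S' = k + 1)
    (hfar : c₀ * r ≤ Metric.infDist (r • e) (S' : Set (EuclideanSpace ℝ (Fin (d + 1))))) :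
    (1 - (2 ^ z + 1) * ε) * Metric.infDist (r • e) (S' : Set (EuclideanSpace ℝ (Fin (d + 1)))) ^ z ≤
        Metric.infDist p' (S' : Set (EuclideanSpace ℝ (Fin (d + 1)))) ^ z ∧
      Metric.infDist p' (S' : Set (EuclideanSpace ℝ (Fin (d + 1)))) ^ z ≤
        (1 + (2 ^ z + 1) * ε) *
          Metric.infDist (r • e) (S' : Set (EuclideanSpace ℝ (Fin (d + 1)))) ^ z :=
  stmt10_general d z ε hz hε P hP p hp ψ r c₀ hψ hr hc₀ e he p' hp' S' hfar
end

section
/- Let d ≥ 1 be an integer, k ∈ {0,…,d−1}, z ≥ 1 a real number, and ε ∈ (0, 1/(2^{z+1}+2)]. Let (P,w) be a weighted set of n ≥ 1 points in ℝ^d, set ψ = (ε/z)^z, r = 1 + max_{q∈P} D_z(q, 0_d)/(ψ·ε²), c₀ = (εr)^{1/z} / √((εr)^{2/z} + r²), c₁ = 2^z + 1, and e_{d+1} = (0,…,0,1) ∈ ℝ^{d+1}. For q ∈ P let q' = (q | r). Let Q₁ be the set of nonempty affine k-subspaces S of ℝ^d with D_z(0_d, S) < ε·r, and let Q₁' be the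 set of (k+1)-dimensional linear subspaces S' of ℝ^{d+1} with dist(r·e_{d+1}, S') < c₀·r. Then for every p ∈ P, | sup_{S∈Q₁} w(p)·D_z(p,S)/Σ_{q∈P} w(q)·D_z(q,S) − sup_{S'∈Q₁'} w(p)·D_z(p',S')/Σ_{q∈P} w(q)·D_z(q',S') | ≤ 16·c₁·ε · sup_{S'∈Q₁'} w(p)·D_z(p',S')/Σ_{q∈P} w(q)·D_z(q',S'), where each supremum is taken over those subspaces for which the corresponding denominator is nonzero. -/
open Metric Real

local notation "ℝ^" d:max => EuclideanSpace ℝ (Fin d)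

section RealInequalities

lemma sq_rpow_half {b : ℝ} (hb : 0 ≤ b) (z : ℝ) : (b ^ 2) ^ (z / 2) = b ^ z := by
  rw [← rpow_natCast, ← rpow_mul hb]
  congr 1
  push_cast
  ring

lemma one_add_rpow_le_one_div_one_sub {x y ε : ℝ} (hx : 0 ≤ x) (hy : 0 ≤ y) (h : x * y ≤ ε)
    (hε : ε < 1) : (1 + x) ^ y ≤ 1 / (1 - ε) :=
  calc (1 + x) ^ y ≤ exp x ^ y := rpow_le_rpow (by linarith) (by linarith [add_one_le_exp x]) hy
    _ = exp (x * y) := (exp_mul x y).symm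
    _ ≤ exp ε := exp_le_exp.2 h
    _ ≤ 1 / (1 - ε) := exp_bound_div_one_sub_of_interval ((mul_nonneg hx hy).trans h) hε

lemma one_add_sq_div_sq_rpow_le {x z ε r : ℝ} (hx : 0 ≤ x) (hz : 1 ≤ z) (hε : ε < 1) (hr : 0 < r)
    (h : x ≤ ε / z * r) : (1 + x ^ 2 / r ^ 2) ^ (z / 2) ≤ 1 / (1 - ε) := by
  have hxr : x / r ≤ ε / z := by rwa [div_le_iff₀ hr]
  have hεz : 0 ≤ ε / z := (div_nonneg hx hr.le).trans hxr
  have hε0 : 0 ≤ ε := by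
    have := mul_nonneg hεz (by linarith : 0 ≤ z)
    rwa [div_mul_cancel₀ ε (by linarith)] at this
  refine one_add_rpow_le_one_div_one_sub (by positivity) (by linarith) ?_ hε
  calc x ^ 2 / r ^ 2 * (z / 2) = (x / r) ^ 2 * (z / 2) := by ring
    _ ≤ (ε / z) ^ 2 * (z / 2) := by gcongr
    _ = ε * (ε / (2 * z)) := by field_simp
    _ ≤ ε * 1 := by gcongr; rw [div_le_one (by linarith)]; linarith
    _ = ε := mul_one ε

lemma le_div_mul_of_rpow_div_le {x z ε r : ℝ} (hx : 0 ≤ x) (hz : 1 ≤ z) (hε : 0 < ε) (hε1 : ε ≤ 1)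
    (h : x ^ z / ((ε / z) ^ z * ε ^ 2) ≤ r - 1) : x ≤ ε / z * r := by
  have hz0 : 0 < z := by linarith
  have hψ : 0 < (ε / z) ^ z * ε ^ 2 := by positivity
  rw [div_le_iff₀ hψ] at h
  have hr : 1 ≤ r := by nlinarith [rpow_nonneg hx z]
  rw [← rpow_le_rpow_iff hx (by positivity) hz0, mul_rpow (by positivity) (by positivity)]
  calc x ^ z ≤ (ε / z) ^ z * ((r - 1) * ε ^ 2) := by linarith
    _ ≤ (ε / z) ^ z * r ^ z := by
      gcongr
      calc (r - 1) * ε ^ 2 ≤ r * 1 := by gcongr <;> nlinarith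
        _ ≤ r ^ z := by rw [mul_one]; exact self_le_rpow_of_one_le hr hz

lemma div_sqrt_sq_add_sq_lt_div_sqrt_iff {s a r : ℝ} (hs : 0 ≤ s) (ha : 0 ≤ a) (hr : r ≠ 0) :
    s / √(s ^ 2 + r ^ 2) < a / √(a ^ 2 + r ^ 2) ↔ s < a := by
  have hmono : StrictMonoOn (fun s : ℝ => s / √(s ^ 2 + r ^ 2)) (Set.Ici 0) := by
    intro s (hs : 0 ≤ s) a (ha : 0 ≤ a) hsa
    rw [div_lt_div_iff₀ (by positivity) (by positivity)]
    refine lt_of_pow_lt_pow_left₀ 2 (by positivity) ?_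
    rw [mul_pow, mul_pow, sq_sqrt (by positivity), sq_sqrt (by positivity)]
    have : s ^ 2 < a ^ 2 := by gcongr
    nlinarith [sq_pos_of_ne_zero hr]
  exact hmono.lt_iff_lt hs ha

lemma rpow_two_div_eq_sq {ρ : ℝ} (hρ : 0 ≤ ρ) (z : ℝ) : ρ ^ (2 / z) = (ρ ^ (1 / z)) ^ 2 := by
  rw [← rpow_mul_natCast hρ, Nat.cast_ofNat, one_div_mul_eq_div]

lemma rpow_lt_iff_div_sqrt_mul_lt {s ρ z r : ℝ} (hs : 0 ≤ s) (hρ : 0 < ρ) (hz : 0 < z)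
    (hr : 0 < r) :
    s ^ z < ρ ↔ s / √(s ^ 2 + r ^ 2) * r < ρ ^ (1 / z) / √(ρ ^ (2 / z) + r ^ 2) * r := by
  rw [rpow_two_div_eq_sq hρ.le, mul_lt_mul_iff_left₀ hr,
    div_sqrt_sq_add_sq_lt_div_sqrt_iff hs (rpow_nonneg hρ.le _) hr.ne', one_div,
    lt_rpow_inv_iff_of_pos hs hρ.le hz]

lemma div_sqrt_sq_add_sq_lt_one (a : ℝ) {r : ℝ} (hr : r ≠ 0) : a / √(a ^ 2 + r ^ 2) < 1 := by
  rw [div_lt_one (by positivity)]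
  calc a ≤ |a| := le_abs_self a
    _ = √(a ^ 2) := (sqrt_sq_eq_abs a).symm
    _ < √(a ^ 2 + r ^ 2) := sqrt_lt_sqrt (sq_nonneg a) (by simp [sq_pos_of_ne_zero hr])

end RealInequalities

section SupremumComparison

variable {T₁ T₂ : Set ℝ} {H : ℝ}

lemma sSup_le_mul_sSup (hH : 0 ≤ H) (hT₂ : BddAbove T₂) (hT₂0 : ∀ t ∈ T₂, 0 ≤ t)
    (h : ∀ t ∈ T₁, ∃ t' ∈ T₂, t ≤ H * t') : sSup T₁ ≤ H * sSup T₂ :=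
  Real.sSup_le (fun t ht => by
      obtain ⟨t', ht', hle⟩ := h t ht
      exact hle.trans (mul_le_mul_of_nonneg_left (le_csSup hT₂ ht') hH))
    (mul_nonneg hH (Real.sSup_nonneg hT₂0))

lemma abs_sub_le_of_le_mul {A B : ℝ} (hH : 1 ≤ H) (hAB : A ≤ H * B)
    (hBA : B ≤ H * A) : |A - B| ≤ (H - 1) * B := by
  rw [abs_sub_le_iff]
  constructor
  · linarith
  · nlinarith [sq_nonneg (H - 1)]

lemma abs_sSup_sub_sSup_le (hH : 1 ≤ H) (hT₁ : BddAbove T₁) (hT₂ : BddAbove T₂)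
    (hT₁0 : ∀ t ∈ T₁, 0 ≤ t) (hT₂0 : ∀ t ∈ T₂, 0 ≤ t) (h₁₂ : ∀ t ∈ T₁, ∃ t' ∈ T₂, t ≤ H * t')
    (h₂₁ : ∀ t ∈ T₂, ∃ t' ∈ T₁, t ≤ H * t') : |sSup T₁ - sSup T₂| ≤ (H - 1) * sSup T₂ :=
  abs_sub_le_of_le_mul hH
    (sSup_le_mul_sSup (by linarith) hT₂ hT₂0 h₁₂) (sSup_le_mul_sSup (by linarith) hT₁ hT₁0 h₂₁)

end SupremumComparison

section Sensitivity

variable {α : Type*} {P : Finset α} {w : α → ℝ} {p : α}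

noncomputable def sensitivity (P : Finset α) (w g : α → ℝ) (p : α) : ℝ :=
  w p * g p / ∑ q ∈ P, w q * g q

lemma sensitivity_nonneg {g : α → ℝ} (hw : ∀ q ∈ P, 0 ≤ w q) (hg : ∀ q ∈ P, 0 ≤ g q)
    (hp : p ∈ P) : 0 ≤ sensitivity P w g p :=
  div_nonneg (mul_nonneg (hw p hp) (hg p hp))
    (Finset.sum_nonneg fun q hq => mul_nonneg (hw q hq) (hg q hq))

lemma sensitivity_le_one {g : α → ℝ} (hw : ∀ q ∈ P, 0 ≤ w q) (hg : ∀ q ∈ P, 0 ≤ g q)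
    (hp : p ∈ P) : sensitivity P w g p ≤ 1 :=
  div_le_one_of_le₀ (Finset.single_le_sum (fun q hq => mul_nonneg (hw q hq) (hg q hq)) hp)
    (Finset.sum_nonneg fun q hq => mul_nonneg (hw q hq) (hg q hq))

lemma sensitivity_rpow_infDist_mem_Icc {X : Type*} [PseudoMetricSpace X] (hw : ∀ q ∈ P, 0 ≤ w q)
    (hp : p ∈ P) (x : α → X) (s : Set X) (z : ℝ) :
    sensitivity P w (fun q => infDist (x q) s ^ z) p ∈ Set.Icc 0 1 :=
  ⟨sensitivity_nonneg hw (fun _ _ => rpow_nonneg infDist_nonneg z) hp,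
    sensitivity_le_one hw (fun _ _ => rpow_nonneg infDist_nonneg z) hp⟩

lemma sensitivity_le_mul_of_bounds {f F : α → ℝ} {a H : ℝ} (ha : 0 < a)
    (hw : ∀ q ∈ P, 0 ≤ w q) (hf : ∀ q ∈ P, 0 ≤ f q)
    (h : ∀ q ∈ P, a * f q ≤ F q ∧ F q ≤ a * H * f q) (hp : p ∈ P)
    (hden : 0 < ∑ q ∈ P, w q * f q) :
    0 < ∑ q ∈ P, w q * F q ∧ sensitivity P w F p ≤ H * sensitivity P w f p := by
  have hsum : a * ∑ q ∈ P, w q * f q ≤ ∑ q ∈ P, w q * F q := by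
    rw [Finset.mul_sum]
    exact Finset.sum_le_sum fun q hq => by nlinarith [(h q hq).1, hw q hq]
  have hFp : w p * F p ≤ a * H * (w p * f p) := by nlinarith [(h p hp).2, hw p hp]
  have hFp0 : 0 ≤ w p * F p :=
    mul_nonneg (hw p hp) ((mul_nonneg ha.le (hf p hp)).trans (h p hp).1)
  refine ⟨(mul_pos ha hden).trans_le hsum, ?_⟩
  calc sensitivity P w F p ≤ a * H * (w p * f p) / (a * ∑ q ∈ P, w q * f q) :=
        div_le_div₀ (hFp0.trans hFp) hFp (mul_pos ha hden) hsum
    _ = H * sensitivity P w f p := by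
      rw [sensitivity, mul_assoc, mul_div_mul_left _ _ ha.ne', mul_div_assoc]

end Sensitivity

section Orthogonal

variable {E : Type*} [NormedAddCommGroup E] [InnerProductSpace ℝ E]

lemma infDist_mk'_eq_norm {W : Submodule ℝ E} [W.HasOrthogonalProjection] {v : E} (hv : v ∈ Wᗮ)
    (q : E) : infDist q (AffineSubspace.mk' v W) = ‖Wᗮ.starProjection q - v‖ := by
  have : Nonempty (AffineSubspace.mk' v W) := ⟨⟨v, AffineSubspace.self_mem_mk' v W⟩⟩
  have : (AffineSubspace.mk' v W).direction.HasOrthogonalProjection := by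
    rw [AffineSubspace.direction_mk']; infer_instance
  have hfoot : Wᗮ.starProjection q - v = q - (v + W.starProjection q) := by
    rw [Submodule.starProjection_orthogonal_val]; abel
  rw [← EuclideanGeometry.dist_orthogonalProjection_eq_infDist,
    EuclideanGeometry.coe_orthogonalProjection_eq_iff_mem.2, dist_eq_norm, hfoot]
  rw [AffineSubspace.direction_mk', AffineSubspace.mem_mk', vsub_eq_sub, vsub_eq_sub, ← hfoot]
  exact ⟨by simp [W.starProjection_apply_mem q],
    Submodule.sub_mem _ (Wᗮ.starProjection_apply_mem q) hv⟩

lemma AffineSubspace.exists_eq_mk'_of_mem_orthogonal (S : AffineSubspace ℝ E)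
    [S.direction.HasOrthogonalProjection] (hS : (S : Set E).Nonempty) :
    ∃ v ∈ S.directionᗮ, S = AffineSubspace.mk' v S.direction := by
  have : Nonempty S := hS.to_subtype
  refine ⟨EuclideanGeometry.orthogonalProjection S 0, ?_,
    (mk'_eq (EuclideanGeometry.orthogonalProjection_mem 0)).symm⟩
  simpa using Submodule.neg_mem _
    (EuclideanGeometry.vsub_orthogonalProjection_mem_direction_orthogonal S 0)

/-- `(y | r)` is at distance at least `r ‖y - v‖ / √(‖v‖² + r²)` from the line `ℝ (v | r)`. -/
lemma sq_mul_norm_sub_sq_le (y v : E) (r t : ℝ) :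
    r ^ 2 * ‖y - v‖ ^ 2 ≤ (‖v‖ ^ 2 + r ^ 2) * (‖y - t • v‖ ^ 2 + (r - t * r) ^ 2) := by
  have hcs : inner ℝ y v ^ 2 ≤ ‖y‖ ^ 2 * ‖v‖ ^ 2 := by
    rw [← mul_pow]
    exact sq_le_sq' (neg_le_of_abs_le (abs_real_inner_le_norm y v)) (real_inner_le_norm y v)
  rw [norm_sub_sq_real, norm_sub_sq_real, inner_smul_right, norm_smul, mul_pow, Real.norm_eq_abs,
    sq_abs]
  nlinarith [sq_nonneg ((‖v‖ ^ 2 + r ^ 2) * t - (inner ℝ y v + r ^ 2))]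

lemma exists_sq_norm_sub_smul_le (y v : E) {r : ℝ} (hr : r ≠ 0) :
    ∃ t : ℝ, (‖v‖ ^ 2 + r ^ 2) * (‖y - t • v‖ ^ 2 + (r - t * r) ^ 2) ≤
      (r ^ 2 + ‖y‖ ^ 2) * ‖y - v‖ ^ 2 := by
  have hC : 0 < ‖v‖ ^ 2 + r ^ 2 := by positivity
  -- `t (v | r)` is the foot of the perpendicular from `(y | r)` to the line `ℝ (v | r)`
  refine ⟨(inner ℝ y v + r ^ 2) / (‖v‖ ^ 2 + r ^ 2), ?_⟩
  rw [norm_sub_sq_real, norm_sub_sq_real, inner_smul_right, norm_smul, mul_pow, Real.norm_eq_abs,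
    sq_abs]
  field_simp
  nlinarith [sq_nonneg (‖y‖ ^ 2 - inner ℝ y v)]

end Orthogonal

section Lift

variable {d : ℕ}

@[simp] lemma lift_apply_castSucc (x : ℝ^d) (s : ℝ) (i : Fin d) : lift x s i.castSucc = x i := by
  simp [lift]

@[simp] lemma lift_apply_last_s13 (x : ℝ^d) (s : ℝ) : lift x s (Fin.last d) = s := by
  simp [lift]

lemma lift_ext {x y : ℝ^(d + 1)} (h : ∀ i : Fin d, x i.castSucc = y i.castSucc)
    (hlast : x (Fin.last d) = y (Fin.last d)) : x = y := by
  ext i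
  induction i using Fin.lastCases with
  | last => exact hlast
  | cast i => exact h i

lemma lift_init_last (x : ℝ^(d + 1)) :
    lift (WithLp.toLp 2 fun i => x i.castSucc) (x (Fin.last d)) = x :=
  lift_ext (fun _ => by simp) (by simp)

lemma lift_add (x y : ℝ^d) (s t : ℝ) : lift x s + lift y t = lift (x + y) (s + t) :=
  lift_ext (fun _ => by simp) (by simp)

lemma lift_smul (c : ℝ) (x : ℝ^d) (s : ℝ) : c • lift x s = lift (c • x) (c * s) :=
  lift_ext (fun _ => by simp) (by simp)

lemma dist_lift_sq (x y : ℝ^d) (s t : ℝ) :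
    dist (lift x s) (lift y t) ^ 2 = dist x y ^ 2 + (s - t) ^ 2 := by
  simp only [EuclideanSpace.dist_eq, Real.dist_eq, sq_abs]
  rw [sq_sqrt (by positivity), sq_sqrt (by positivity), Fin.sum_univ_castSucc]
  simp

noncomputable def liftZero (d : ℕ) : ℝ^d →ₗ[ℝ] ℝ^(d + 1) where
  toFun x := lift x 0
  map_add' x y := by rw [lift_add, add_zero]
  map_smul' c x := by rw [RingHom.id_apply, lift_smul, mul_zero]

@[simp] lemma liftZero_apply (x : ℝ^d) : liftZero d x = lift x 0 := rfl

lemma liftZero_injective : Function.Injective (liftZero d) := fun x y h => by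
  ext i
  simpa using congr($h i.castSucc)

end Lift

section LiftSubspace

variable {d : ℕ} {W : Submodule ℝ (ℝ^d)} {v : ℝ^d} {r : ℝ}

/-- The linear span of `{(x | r) : x ∈ v + W}`. -/
noncomputable def liftSubspace (W : Submodule ℝ (ℝ^d)) (v : ℝ^d) (r : ℝ) :
    Submodule ℝ (ℝ^(d + 1)) :=
  W.map (liftZero d) ⊔ ℝ ∙ lift v r

lemma mem_liftSubspace {x : ℝ^(d + 1)} :
    x ∈ liftSubspace W v r ↔ ∃ u ∈ W, ∃ t : ℝ, x = lift (u + t • v) (t * r) := by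
  simp only [liftSubspace, Submodule.mem_sup, Submodule.mem_map, Submodule.mem_span_singleton]
  constructor
  · rintro ⟨_, ⟨u, hu, rfl⟩, _, ⟨t, rfl⟩, rfl⟩
    exact ⟨u, hu, t, by rw [liftZero_apply, lift_smul, lift_add, zero_add]⟩
  · rintro ⟨u, hu, t, rfl⟩
    exact ⟨_, ⟨u, hu, rfl⟩, _, ⟨t, rfl⟩, by rw [liftZero_apply, lift_smul, lift_add, zero_add]⟩

lemma finrank_liftSubspace (W : Submodule ℝ (ℝ^d)) (v : ℝ^d) (hr : r ≠ 0) :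
    Module.finrank ℝ (liftSubspace W v r) = Module.finrank ℝ W + 1 := by
  have hdisj : Disjoint (W.map (liftZero d)) (ℝ ∙ lift v r) := by
    rw [Submodule.disjoint_def]
    rintro _ ⟨u, -, rfl⟩ hx
    obtain ⟨t, ht⟩ := Submodule.mem_span_singleton.1 hx
    have ht0 : t = 0 := by simpa [hr] using congr($ht (Fin.last d))
    rw [← ht, ht0, zero_smul]
  have hne : lift v r ≠ 0 := fun h => hr (by simpa using congr($h (Fin.last d)))
  have hsum := Submodule.finrank_sup_add_finrank_inf_eq (W.map (liftZero d)) (ℝ ∙ lift v r)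
  rw [hdisj.eq_bot, finrank_bot, add_zero, finrank_span_singleton hne,
    ← (Submodule.equivMapOfInjective _ liftZero_injective W).finrank_eq] at hsum
  exact hsum

end LiftSubspace

section LiftSubspaceDecomposition

variable {d : ℕ} {r : ℝ}

lemma liftSubspace_add_of_mem {W : Submodule ℝ (ℝ^d)} (v : ℝ^d) {w : ℝ^d} (hw : w ∈ W) :
    liftSubspace W (v + w) r = liftSubspace W v r := by
  have key : ∀ v w : ℝ^d, w ∈ W → liftSubspace W (v + w) r ≤ liftSubspace W v r := by
    intro v w hw x hx
    obtain ⟨u, hu, t, rfl⟩ := mem_liftSubspace.1 hx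
    exact mem_liftSubspace.2
      ⟨u + t • w, W.add_mem hu (W.smul_mem t hw), t, by rw [smul_add]; abel_nf⟩
  exact le_antisymm (key v w hw) (by simpa using key (v + w) (-w) (W.neg_mem hw))

lemma eq_liftSubspace_comap {S' : Submodule ℝ (ℝ^(d + 1))} {u : ℝ^d} (hu : lift u r ∈ S')
    (hr : r ≠ 0) : S' = liftSubspace (S'.comap (liftZero d)) u r := by
  refine le_antisymm (fun x hx => ?_)
    (sup_le (Submodule.map_comap_le _ _) ((Submodule.span_singleton_le_iff_mem _ _).2 hu))
  set t := x (Fin.last d) / r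
  set y := x - t • lift u r
  have hy : lift (WithLp.toLp 2 fun i => y i.castSucc) 0 = y := by
    convert lift_init_last y using 2
    simp [y, t, hr]
  refine mem_liftSubspace.2
    ⟨WithLp.toLp 2 fun i => y i.castSucc, ?_, t, lift_ext (fun i => ?_) (by simp [t, hr])⟩
  · rw [Submodule.mem_comap, liftZero_apply, hy]
    exact S'.sub_mem hx (S'.smul_mem t hu)
  · simp [y]

lemma exists_lift_mem_of_infDist_lt {S' : Submodule ℝ (ℝ^(d + 1))}
    (h : infDist (lift 0 r) (S' : Set (ℝ^(d + 1))) < r) : ∃ u : ℝ^d, lift u r ∈ S' := by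
  obtain ⟨x, hx, hlast⟩ : ∃ x ∈ S', x (Fin.last d) ≠ 0 := by
    by_contra! h0
    have : r ≤ infDist (lift 0 r) (S' : Set (ℝ^(d + 1))) :=
      (le_infDist ⟨0, S'.zero_mem⟩).2 fun x hx => by
      have hx' : lift (WithLp.toLp 2 fun i => x i.castSucc) 0 = x := by
        conv_rhs => rw [← lift_init_last x, h0 x hx]
      have hd := dist_lift_sq 0 (WithLp.toLp 2 fun i => x i.castSucc) r 0
      rw [hx'] at hd
      nlinarith [dist_nonneg (x := lift (0 : ℝ^d) r) (y := x), infDist_nonneg.trans_lt h]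
    linarith
  refine ⟨WithLp.toLp 2 fun i => r / x (Fin.last d) * x i.castSucc, ?_⟩
  convert S'.smul_mem (r / x (Fin.last d)) hx using 1
  exact lift_ext (fun i => by simp) (by simp [hlast])

lemma exists_eq_liftSubspace {S' : Submodule ℝ (ℝ^(d + 1))}
    (h : infDist (lift 0 r) (S' : Set (ℝ^(d + 1))) < r) :
    ∃ (W : Submodule ℝ (ℝ^d)) (v : ℝ^d), v ∈ Wᗮ ∧ S' = liftSubspace W v r := by
  obtain ⟨u, hu⟩ := exists_lift_mem_of_infDist_lt h
  set W := S'.comap (liftZero d)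
  refine ⟨W, Wᗮ.starProjection u, Wᗮ.starProjection_apply_mem u, ?_⟩
  calc S' = liftSubspace W u r := eq_liftSubspace_comap hu (infDist_nonneg.trans_lt h).ne'
    _ = liftSubspace W (Wᗮ.starProjection u + W.starProjection u) r := by
      rw [add_comm (Wᗮ.starProjection u), W.starProjection_add_starProjection_orthogonal]
    _ = _ := liftSubspace_add_of_mem _ (W.starProjection_apply_mem u)

end LiftSubspaceDecomposition

section LiftSubspaceDistance

variable {d : ℕ} {W : Submodule ℝ (ℝ^d)} {v : ℝ^d} {r : ℝ}

lemma infDist_zero_mk' (hv : v ∈ Wᗮ) : infDist 0 (AffineSubspace.mk' v W : Set (ℝ^d)) = ‖v‖ := by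
  simp [infDist_mk'_eq_norm hv]

lemma sq_mul_infDist_le_sq_mul_infDist_lift (hv : v ∈ Wᗮ) (q : ℝ^d) (r : ℝ) :
    r ^ 2 * infDist q (AffineSubspace.mk' v W : Set (ℝ^d)) ^ 2 ≤
      (‖v‖ ^ 2 + r ^ 2) * infDist (lift q r) (liftSubspace W v r : Set (ℝ^(d + 1))) ^ 2 := by
  obtain ⟨x, hx, hxd⟩ := (liftSubspace W v r).closed_of_finiteDimensional.exists_infDist_eq_dist
    ⟨0, Submodule.zero_mem _⟩ (lift q r)
  obtain ⟨u, hu, t, rfl⟩ := mem_liftSubspace.1 hx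
  have hproj : Wᗮ.starProjection (q - (u + t • v)) = Wᗮ.starProjection q - t • v := by
    rw [map_sub, map_add, map_smul, Submodule.starProjection_eq_self_iff.2 hv,
      Wᗮ.starProjection_apply_eq_zero_iff.2 (W.le_orthogonal_orthogonal hu), zero_add]
  rw [infDist_mk'_eq_norm hv, hxd, dist_lift_sq, dist_eq_norm]
  calc _ ≤ _ := sq_mul_norm_sub_sq_le (Wᗮ.starProjection q) v r t
    _ ≤ _ := by
      gcongr
      rw [← hproj]
      exact Wᗮ.norm_starProjection_apply_le _

lemma sq_mul_infDist_lift_le (hv : v ∈ Wᗮ) (hr : r ≠ 0) (q : ℝ^d) :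
    (‖v‖ ^ 2 + r ^ 2) * infDist (lift q r) (liftSubspace W v r : Set (ℝ^(d + 1))) ^ 2 ≤
      (r ^ 2 + ‖q‖ ^ 2) * infDist q (AffineSubspace.mk' v W : Set (ℝ^d)) ^ 2 := by
  obtain ⟨t, ht⟩ := exists_sq_norm_sub_smul_le (Wᗮ.starProjection q) v hr
  have hmem : lift (W.starProjection q + t • v) (t * r) ∈ liftSubspace W v r :=
    mem_liftSubspace.2 ⟨_, W.starProjection_apply_mem q, t, rfl⟩
  have hdist : dist (lift q r) (lift (W.starProjection q + t • v) (t * r)) ^ 2 =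
      ‖Wᗮ.starProjection q - t • v‖ ^ 2 + (r - t * r) ^ 2 := by
    rw [dist_lift_sq, dist_eq_norm, Submodule.starProjection_orthogonal_val, sub_sub]
  rw [infDist_mk'_eq_norm hv]
  calc _ ≤ (‖v‖ ^ 2 + r ^ 2) * dist (lift q r) (lift (W.starProjection q + t • v) (t * r)) ^ 2 := by
        gcongr
        exacts [infDist_nonneg, infDist_le_dist_of_mem hmem]
    _ ≤ (r ^ 2 + ‖Wᗮ.starProjection q‖ ^ 2) * ‖Wᗮ.starProjection q - v‖ ^ 2 := hdist ▸ ht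
    _ ≤ _ := by gcongr; exact Wᗮ.norm_starProjection_apply_le q

lemma infDist_lift_zero_liftSubspace (hv : v ∈ Wᗮ) (hr : 0 < r) :
    infDist (lift 0 r) (liftSubspace W v r : Set (ℝ^(d + 1))) = ‖v‖ / √(‖v‖ ^ 2 + r ^ 2) * r := by
  have hC : 0 < ‖v‖ ^ 2 + r ^ 2 := by positivity
  have lower := sq_mul_infDist_le_sq_mul_infDist_lift hv 0 r
  have upper := sq_mul_infDist_lift_le hv hr.ne' 0
  rw [infDist_zero_mk' hv, norm_zero] at *
  refine (pow_left_inj₀ infDist_nonneg (by positivity) two_ne_zero).1 ?_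
  rw [div_mul_eq_mul_div, div_pow, sq_sqrt hC.le, eq_div_iff hC.ne']
  linarith

lemma rpow_infDist_lift_bounds (hv : v ∈ Wᗮ) (hr : 0 < r) {z : ℝ} (hz : 0 ≤ z) (q : ℝ^d) :
    (r ^ 2 / (‖v‖ ^ 2 + r ^ 2)) ^ (z / 2) * infDist q (AffineSubspace.mk' v W : Set (ℝ^d)) ^ z ≤
        infDist (lift q r) (liftSubspace W v r : Set (ℝ^(d + 1))) ^ z ∧
      infDist (lift q r) (liftSubspace W v r : Set (ℝ^(d + 1))) ^ z ≤
        (r ^ 2 / (‖v‖ ^ 2 + r ^ 2)) ^ (z / 2) *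
          ((1 + ‖q‖ ^ 2 / r ^ 2) ^ (z / 2) *
            infDist q (AffineSubspace.mk' v W : Set (ℝ^d)) ^ z) := by
  have hC : 0 < ‖v‖ ^ 2 + r ^ 2 := by positivity
  set f := infDist q (AffineSubspace.mk' v W : Set (ℝ^d))
  set D := infDist (lift q r) (liftSubspace W v r : Set (ℝ^(d + 1)))
  have hf : 0 ≤ f := infDist_nonneg
  have hD : 0 ≤ D := infDist_nonneg
  have lower : r ^ 2 / (‖v‖ ^ 2 + r ^ 2) * f ^ 2 ≤ D ^ 2 := by
    rw [div_mul_eq_mul_div, div_le_iff₀ hC]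
    linarith [sq_mul_infDist_le_sq_mul_infDist_lift hv q r]
  have upper : D ^ 2 ≤ r ^ 2 / (‖v‖ ^ 2 + r ^ 2) * ((1 + ‖q‖ ^ 2 / r ^ 2) * f ^ 2) := by
    have : r ^ 2 / (‖v‖ ^ 2 + r ^ 2) * ((1 + ‖q‖ ^ 2 / r ^ 2) * f ^ 2) =
        (r ^ 2 + ‖q‖ ^ 2) * f ^ 2 / (‖v‖ ^ 2 + r ^ 2) := by
      field_simp
    rw [this, le_div_iff₀ hC]
    linarith [sq_mul_infDist_lift_le hv hr.ne' q]
  constructor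
  · rw [← sq_rpow_half hf, ← mul_rpow (by positivity) (by positivity), ← sq_rpow_half hD]
    exact rpow_le_rpow (by positivity) lower (by positivity)
  · rw [← sq_rpow_half hf, ← mul_rpow (by positivity) (by positivity),
      ← mul_rpow (by positivity) (by positivity), ← sq_rpow_half hD]
    exact rpow_le_rpow (by positivity) upper (by positivity)

end LiftSubspaceDistance

section Transfer

variable {d : ℕ} {P : Finset (ℝ^d)} {w : ℝ^d → ℝ} {z ε r : ℝ} {p : ℝ^d}

lemma sensitivity_mk'_liftSubspace_bounds {W : Submodule ℝ (ℝ^d)} {v : ℝ^d} (hv : v ∈ Wᗮ)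
    (hz : 1 ≤ z) (hε : ε < 1) (hr : 0 < r) (hP : ∀ q ∈ P, ‖q‖ ≤ ε / z * r) (hw : ∀ q ∈ P, 0 ≤ w q)
    (hp : p ∈ P) :
    let f := fun q => infDist q (AffineSubspace.mk' v W : Set (ℝ^d)) ^ z
    let F := fun q => infDist (lift q r) (liftSubspace W v r : Set (ℝ^(d + 1))) ^ z
    (0 < ∑ q ∈ P, w q * f q ↔ 0 < ∑ q ∈ P, w q * F q) ∧
      (0 < ∑ q ∈ P, w q * f q →
        sensitivity P w f p ≤ 1 / (1 - ε) * sensitivity P w F p ∧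
        sensitivity P w F p ≤ 1 / (1 - ε) * sensitivity P w f p) := by
  intro f F
  set γ := (r ^ 2 / (‖v‖ ^ 2 + r ^ 2)) ^ (z / 2)
  set H := 1 / (1 - ε)
  have hγ : 0 < γ := by positivity
  have hH : 0 < H := one_div_pos.2 (by linarith)
  have hbounds : ∀ q ∈ P, γ * f q ≤ F q ∧ F q ≤ γ * H * f q := fun q hq => by
    obtain ⟨lower, upper⟩ := rpow_infDist_lift_bounds (z := z) hv hr (by linarith) q
    refine ⟨lower, upper.trans ?_⟩
    rw [mul_assoc]
    gcongr
    exacts [rpow_nonneg infDist_nonneg z,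
      one_add_sq_div_sq_rpow_le (norm_nonneg q) hz hε hr (hP q hq)]
  have hbounds' : ∀ q ∈ P, (γ * H)⁻¹ * F q ≤ f q ∧ f q ≤ (γ * H)⁻¹ * H * F q := fun q hq => by
    obtain ⟨lower, upper⟩ := hbounds q hq
    have hγH : (γ * H)⁻¹ * H = γ⁻¹ := by field_simp
    exact ⟨(inv_mul_le_iff₀ (by positivity)).2 upper, hγH ▸ (le_inv_mul_iff₀ hγ).2 lower⟩
  have hf : ∀ q ∈ P, 0 ≤ f q := fun q _ => rpow_nonneg infDist_nonneg z
  have hF : ∀ q ∈ P, 0 ≤ F q := fun q _ => rpow_nonneg infDist_nonneg z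
  have hfF := fun hden => sensitivity_le_mul_of_bounds hγ hw hf hbounds hp hden
  have hFf := fun hden => sensitivity_le_mul_of_bounds (by positivity) hw hF hbounds' hp hden
  exact ⟨⟨fun h => (hfF h).1, fun h => (hFf h).1⟩, fun h => ⟨(hFf (hfF h).1).2, (hfF h).2⟩⟩

theorem exists_submodule_sensitivity_le (hz : 1 ≤ z) (hε : ε < 1) (hr : 0 < r)
    (hP : ∀ q ∈ P, ‖q‖ ≤ ε / z * r) (hw : ∀ q ∈ P, 0 ≤ w q) (hp : p ∈ P)
    {S : AffineSubspace ℝ (ℝ^d)} (hS : (S : Set (ℝ^d)).Nonempty)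
    (hden : 0 < ∑ q ∈ P, w q * infDist q (S : Set (ℝ^d)) ^ z) :
    ∃ S' : Submodule ℝ (ℝ^(d + 1)), Module.finrank ℝ S' = Module.finrank ℝ S.direction + 1 ∧
      infDist (lift 0 r) (S' : Set (ℝ^(d + 1))) =
        infDist 0 (S : Set (ℝ^d)) / √(infDist 0 (S : Set (ℝ^d)) ^ 2 + r ^ 2) * r ∧
      0 < ∑ q ∈ P, w q * infDist (lift q r) (S' : Set (ℝ^(d + 1))) ^ z ∧
      sensitivity P w (fun q => infDist q (S : Set (ℝ^d)) ^ z) p ≤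
        1 / (1 - ε) *
          sensitivity P w (fun q => infDist (lift q r) (S' : Set (ℝ^(d + 1))) ^ z) p := by
  obtain ⟨v, hv, hSv⟩ := S.exists_eq_mk'_of_mem_orthogonal hS
  rw [hSv] at hden ⊢
  obtain ⟨hpos, hle⟩ := sensitivity_mk'_liftSubspace_bounds hv hz hε hr hP hw hp
  exact ⟨liftSubspace S.direction v r,
    by rw [AffineSubspace.direction_mk', finrank_liftSubspace _ _ hr.ne'],
    by rw [infDist_lift_zero_liftSubspace hv hr, infDist_zero_mk' hv],
    hpos.1 hden, (hle hden).1⟩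

theorem exists_affineSubspace_sensitivity_le (hz : 1 ≤ z) (hε : ε < 1)
    (hP : ∀ q ∈ P, ‖q‖ ≤ ε / z * r) (hw : ∀ q ∈ P, 0 ≤ w q) (hp : p ∈ P)
    {S' : Submodule ℝ (ℝ^(d + 1))} (hS' : infDist (lift 0 r) (S' : Set (ℝ^(d + 1))) < r)
    (hden : 0 < ∑ q ∈ P, w q * infDist (lift q r) (S' : Set (ℝ^(d + 1))) ^ z) :
    ∃ S : AffineSubspace ℝ (ℝ^d), (S : Set (ℝ^d)).Nonempty ∧
      Module.finrank ℝ S' = Module.finrank ℝ S.direction + 1 ∧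
      infDist (lift 0 r) (S' : Set (ℝ^(d + 1))) =
        infDist 0 (S : Set (ℝ^d)) / √(infDist 0 (S : Set (ℝ^d)) ^ 2 + r ^ 2) * r ∧
      0 < ∑ q ∈ P, w q * infDist q (S : Set (ℝ^d)) ^ z ∧
      sensitivity P w (fun q => infDist (lift q r) (S' : Set (ℝ^(d + 1))) ^ z) p ≤
        1 / (1 - ε) * sensitivity P w (fun q => infDist q (S : Set (ℝ^d)) ^ z) p := by
  have hr : 0 < r := infDist_nonneg.trans_lt hS'
  obtain ⟨W, v, hv, rfl⟩ := exists_eq_liftSubspace hS'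
  obtain ⟨hpos, hle⟩ := sensitivity_mk'_liftSubspace_bounds hv hz hε hr hP hw hp
  exact ⟨AffineSubspace.mk' v W, AffineSubspace.mk'_nonempty v W,
    by rw [AffineSubspace.direction_mk', finrank_liftSubspace _ _ hr.ne'],
    by rw [infDist_lift_zero_liftSubspace hv hr, infDist_zero_mk' hv],
    hpos.2 hden, (hle (hpos.2 hden)).2⟩

end Transfer

theorem stmt13_general (d k : ℕ)
    (z ε : ℝ) (hz : 1 ≤ z) (hε : ε ∈ Set.Ioc (0 : ℝ) (1 / (2 ^ (z + 1) + 2)))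
    (P : Finset (EuclideanSpace ℝ (Fin d))) (hP : P.Nonempty)
    (w : EuclideanSpace ℝ (Fin d) → ℝ) (hw : ∀ q ∈ P, 0 ≤ w q)
    (ψ r c₀ c₁ : ℝ) (hψ : ψ = (ε / z) ^ z)
    (hr : r = 1 + P.sup' hP fun q => dist q 0 ^ z / (ψ * ε ^ 2))
    (hc₀ : c₀ = (ε * r) ^ (1 / z) / Real.sqrt ((ε * r) ^ (2 / z) + r ^ 2))
    (hc₁ : c₁ = 2 ^ z + 1)
    (e : EuclideanSpace ℝ (Fin (d + 1))) (he : e = lift 0 1)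
    (p : EuclideanSpace ℝ (Fin d)) (hp : p ∈ P) :
    |sSup {t : ℝ | ∃ S : AffineSubspace ℝ (EuclideanSpace ℝ (Fin d)),
        (S : Set (EuclideanSpace ℝ (Fin d))).Nonempty ∧
        Module.finrank ℝ S.direction = k ∧
        Metric.infDist 0 (S : Set (EuclideanSpace ℝ (Fin d))) ^ z < ε * r ∧
        0 < (∑ q ∈ P, w q * Metric.infDist q (S : Set (EuclideanSpace ℝ (Fin d))) ^ z) ∧
        t = w p * Metric.infDist p (S : Set (EuclideanSpace ℝ (Fin d))) ^ z /
            ∑ q ∈ P, w q * Metric.infDist q (S : Set (EuclideanSpace ℝ (Fin d))) ^ z} -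
      sSup {t : ℝ | ∃ S' : Submodule ℝ (EuclideanSpace ℝ (Fin (d + 1))),
        Module.finrank ℝ S' = k + 1 ∧
        Metric.infDist (r • e) (S' : Set (EuclideanSpace ℝ (Fin (d + 1)))) < c₀ * r ∧
        0 < (∑ q ∈ P, w q *
            Metric.infDist (lift q r) (S' : Set (EuclideanSpace ℝ (Fin (d + 1)))) ^ z) ∧
        t = w p * Metric.infDist (lift p r) (S' : Set (EuclideanSpace ℝ (Fin (d + 1)))) ^ z /
            ∑ q ∈ P, w q *
              Metric.infDist (lift q r) (S' : Set (EuclideanSpace ℝ (Fin (d + 1)))) ^ z}| ≤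
      16 * c₁ * ε *
        sSup {t : ℝ | ∃ S' : Submodule ℝ (EuclideanSpace ℝ (Fin (d + 1))),
          Module.finrank ℝ S' = k + 1 ∧
          Metric.infDist (r • e) (S' : Set (EuclideanSpace ℝ (Fin (d + 1)))) < c₀ * r ∧
          0 < (∑ q ∈ P, w q *
              Metric.infDist (lift q r) (S' : Set (EuclideanSpace ℝ (Fin (d + 1)))) ^ z) ∧
          t = w p * Metric.infDist (lift p r) (S' : Set (EuclideanSpace ℝ (Fin (d + 1)))) ^ z /
              ∑ q ∈ P, w q *
                Metric.infDist (lift q r) (S' : Set (EuclideanSpace ℝ (Fin (d + 1)))) ^ z} := by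
  obtain ⟨hε0, hεle⟩ := hε
  have hz0 : 0 < z := by linarith
  have hε2 : ε ≤ 1 / 2 :=
    hεle.trans (one_div_le_one_div_of_le two_pos (by linarith [rpow_pos_of_pos two_pos (z + 1)]))
  subst hψ
  have hr0 : 0 < r := hr ▸ add_pos_of_pos_of_nonneg one_pos
    ((by positivity : 0 ≤ dist p 0 ^ z / ((ε / z) ^ z * ε ^ 2)).trans
      (P.le_sup' (fun q => dist q 0 ^ z / ((ε / z) ^ z * ε ^ 2)) hp))
  have hPr : ∀ q ∈ P, ‖q‖ ≤ ε / z * r := fun q hq =>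
    le_div_mul_of_rpow_div_le (norm_nonneg q) hz hε0 (by linarith) <| by
      rw [hr, add_sub_cancel_left, ← dist_zero_right]
      exact P.le_sup' (fun q => dist q 0 ^ z / ((ε / z) ^ z * ε ^ 2)) hq
  have hcond : ∀ s : ℝ, 0 ≤ s → (s ^ z < ε * r ↔ s / √(s ^ 2 + r ^ 2) * r < c₀ * r) :=
    fun s hs => hc₀ ▸ rpow_lt_iff_div_sqrt_mul_lt hs (by positivity) hz0 hr0
  have hc₀r : c₀ * r < r := by
    rw [hc₀, rpow_two_div_eq_sq (by positivity)]
    exact mul_lt_of_lt_one_left hr0 (div_sqrt_sq_add_sq_lt_one _ hr0.ne')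
  have hc₁1 : 1 ≤ c₁ := hc₁ ▸ by linarith [rpow_pos_of_pos two_pos z]
  rw [show r • e = lift 0 r by rw [he, lift_smul, smul_zero, mul_one]]
  refine (abs_sSup_sub_sSup_le (H := 1 / (1 - ε)) ?_ ⟨1, ?_⟩ ⟨1, ?_⟩ ?_ ?hT₂0 ?_ ?_).trans
    (mul_le_mul_of_nonneg_right ?_ (Real.sSup_nonneg ?hT₂0))
  case hT₂0 =>
    rintro _ ⟨S', -, -, -, rfl⟩
    exact (sensitivity_rpow_infDist_mem_Icc hw hp (lift · r) S' z).1
  · rw [le_div_iff₀ (by linarith)]; linarith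
  · rintro _ ⟨S, -, -, -, -, rfl⟩
    exact (sensitivity_rpow_infDist_mem_Icc hw hp id S z).2
  · rintro _ ⟨S', -, -, -, rfl⟩
    exact (sensitivity_rpow_infDist_mem_Icc hw hp (lift · r) S' z).2
  · rintro _ ⟨S, -, -, -, -, rfl⟩
    exact (sensitivity_rpow_infDist_mem_Icc hw hp id S z).1
  · rintro _ ⟨S, hS, rfl, hdist, hden, rfl⟩
    obtain ⟨S', hk', hdist', hden', hle⟩ :=
      exists_submodule_sensitivity_le hz (by linarith) hr0 hPr hw hp hS hden
    exact ⟨_, ⟨S', hk', hdist' ▸ (hcond _ infDist_nonneg).1 hdist, hden', rfl⟩, hle⟩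
  · rintro _ ⟨S', hk', hdist', hden', rfl⟩
    obtain ⟨S, hS, hk, hdist, hden, hle⟩ :=
      exists_affineSubspace_sensitivity_le hz (by linarith) hPr hw hp (hdist'.trans hc₀r) hden'
    exact ⟨_, ⟨S, hS, by omega, (hcond _ infDist_nonneg).2 (hdist ▸ hdist'), hden, rfl⟩, hle⟩
  · rw [div_sub_one (by linarith), div_le_iff₀ (by linarith)]
    nlinarith [mul_nonneg (mul_nonneg hε0.le (sub_nonneg.2 hc₁1)) (by linarith : (0 : ℝ) ≤ 1 - ε)]

/-- With a weighted set `(P,w)` of `n ≥ 1` points in `ℝ^d`, `z ≥ 1`,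
`ε ∈ (0, 1/(2^{z+1}+2)]`, `ψ = (ε/z)^z`, `r = 1 + max_{q∈P} dist(q,0)^z/(ψε²)`,
`c₀ = (εr)^{1/z}/√((εr)^{2/z}+r²)`, `c₁ = 2^z+1`, `q' = (q|r)`: let `Q₁` be the nonempty
affine `k`-subspaces `S` of `ℝ^d` with `D_z(0,S) < εr` and `Q₁'` the `(k+1)`-dimensional
linear subspaces `S'` of `ℝ^{d+1}` with `dist(r·e_{d+1},S') < c₀r`. Then for every
`p ∈ P`,
`|sup_{S∈Q₁} w(p)D_z(p,S)/Σ_q w(q)D_z(q,S) − sup_{S'∈Q₁'} w(p)D_z(p',S')/Σ_q w(q)D_z(q',S')|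
  ≤ 16c₁ε · sup_{S'∈Q₁'} w(p)D_z(p',S')/Σ_q w(q)D_z(q',S')`,
both suprema over subspaces with nonzero denominator. -/
theorem stmt13 (d k n : ℕ) (hd : 1 ≤ d) (hk : k ≤ d - 1) (hn : 1 ≤ n)
    (z ε : ℝ) (hz : 1 ≤ z) (hε : ε ∈ Set.Ioc (0 : ℝ) (1 / (2 ^ (z + 1) + 2)))
    (P : Finset (EuclideanSpace ℝ (Fin d))) (hP : P.Nonempty) (hcard : P.card = n)
    (w : EuclideanSpace ℝ (Fin d) → ℝ) (hw : ∀ q ∈ P, 0 ≤ w q)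
    (ψ r c₀ c₁ : ℝ) (hψ : ψ = (ε / z) ^ z)
    (hr : r = 1 + P.sup' hP fun q => dist q 0 ^ z / (ψ * ε ^ 2))
    (hc₀ : c₀ = (ε * r) ^ (1 / z) / Real.sqrt ((ε * r) ^ (2 / z) + r ^ 2))
    (hc₁ : c₁ = 2 ^ z + 1)
    (e : EuclideanSpace ℝ (Fin (d + 1))) (he : e = lift 0 1)
    (p : EuclideanSpace ℝ (Fin d)) (hp : p ∈ P) :
    |sSup {t : ℝ | ∃ S : AffineSubspace ℝ (EuclideanSpace ℝ (Fin d)),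
        (S : Set (EuclideanSpace ℝ (Fin d))).Nonempty ∧
        Module.finrank ℝ S.direction = k ∧
        Metric.infDist 0 (S : Set (EuclideanSpace ℝ (Fin d))) ^ z < ε * r ∧
        0 < (∑ q ∈ P, w q * Metric.infDist q (S : Set (EuclideanSpace ℝ (Fin d))) ^ z) ∧
        t = w p * Metric.infDist p (S : Set (EuclideanSpace ℝ (Fin d))) ^ z /
            ∑ q ∈ P, w q * Metric.infDist q (S : Set (EuclideanSpace ℝ (Fin d))) ^ z} -
      sSup {t : ℝ | ∃ S' : Submodule ℝ (EuclideanSpace ℝ (Fin (d + 1))),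
        Module.finrank ℝ S' = k + 1 ∧
        Metric.infDist (r • e) (S' : Set (EuclideanSpace ℝ (Fin (d + 1)))) < c₀ * r ∧
        0 < (∑ q ∈ P, w q *
            Metric.infDist (lift q r) (S' : Set (EuclideanSpace ℝ (Fin (d + 1)))) ^ z) ∧
        t = w p * Metric.infDist (lift p r) (S' : Set (EuclideanSpace ℝ (Fin (d + 1)))) ^ z /
            ∑ q ∈ P, w q *
              Metric.infDist (lift q r) (S' : Set (EuclideanSpace ℝ (Fin (d + 1)))) ^ z}| ≤
      16 * c₁ * ε *
        sSup {t : ℝ | ∃ S' : Submodule ℝ (EuclideanSpace ℝ (Fin (d + 1))),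
          Module.finrank ℝ S' = k + 1 ∧
          Metric.infDist (r • e) (S' : Set (EuclideanSpace ℝ (Fin (d + 1)))) < c₀ * r ∧
          0 < (∑ q ∈ P, w q *
              Metric.infDist (lift q r) (S' : Set (EuclideanSpace ℝ (Fin (d + 1)))) ^ z) ∧
          t = w p * Metric.infDist (lift p r) (S' : Set (EuclideanSpace ℝ (Fin (d + 1)))) ^ z /
              ∑ q ∈ P, w q *
                Metric.infDist (lift q r) (S' : Set (EuclideanSpace ℝ (Fin (d + 1)))) ^ z} :=
  stmt13_general d k z ε hz hε P hP w hw ψ r c₀ c₁ hψ hr hc₀ hc₁ e he p hp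
end
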